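/- arXiv:math/0404126 — 3 statements merged into one kernel-verified Lean document; each statement's English description precedes it below -/
import Mathlib

section
/- For every integer n ≥ 1, ∑_{t∈ℛ_n} α(t)/t! = (n−1)!/2^{n−1}, where the sum is over all (isomorphism classes of) rooted trees with n nodes. -/
/-!
Encode increasing labelled trees by parent functions `p : Fin n → Fin n`. The tree factorial of
the shape of `p` is `∏ᵥ s(v)`, where `s(v)` is the size of the subtree at `v`, so the left-hand
side is the sum of `1 / ∏ᵥ s(v)` over all recursive trees on `n` nodes.

Every recursive tree on `n + 1` nodes arises exactly once by attaching the leaf `n` to a node `k`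
of a recursive tree on `n` nodes, which raises `s(u)` by one for the ancestors `u` of `k`.
The resulting factors `∏ᵤ s(u) / (s(u) + 1)`, the product running over the path from a node `i`
down to `k`, add up to `s(i) / 2` when summed over all `k` in the subtree of `i`, by induction on
the subtree. Hence the sum for `n + 1` nodes is `n / 2` times the sum for `n` nodes.
-/

open scoped Classical

/-- Rooted plane trees: a tree is a root together with the ordered list of
the subtrees hanging from its children (left-to-right order). -/
inductive PTree where
  | node : List PTree → PTree

namespace PTree

instance : Inhabited PTree := ⟨.node []⟩

/-- number of nodes -/
def size : PTree → ℕ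
  | node l => 1 + (l.attach.map (fun c => size c.1)).sum
decreasing_by
  have := List.sizeOf_lt_of_mem c.2
  simp only [node.sizeOf_spec]; omega

/-- tree factorial: `t! = |t| * ∏ᵢ tᵢ!` -/
def tfact : PTree → ℕ
  | node l => size (node l) * (l.attach.map (fun c => tfact c.1)).prod
decreasing_by
  have := List.sizeOf_lt_of_mem c.2
  simp only [node.sizeOf_spec]; omega

/-- Shape equivalence: two plane trees have the same underlying rooted tree,
i.e. there is a bijection between children matching shape-equivalent subtrees. -/
inductive ShapeEq : PTree → PTree → Prop
  | node {l₁ l₂ : List PTree} (e : Fin l₁.length ≃ Fin l₂.length)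
      (h : ∀ i, ShapeEq (l₁.get i) (l₂.get (e i))) :
      ShapeEq (node l₁) (node l₂)

lemma size_pos (t : PTree) : 0 < t.size := by
  cases t; simp [size]

/-- The plane tree encoded by a parent function `p : Fin n → Fin n`:
`shapeAux n p fuel i` is the subtree rooted at node `i`, whose children are the
`j` with `p j = i` and `i < j` (ordered by label). `fuel = n` suffices. -/
def shapeAux (n : ℕ) (p : Fin n → Fin n) : ℕ → Fin n → PTree
  | 0, _ => node []
  | fuel+1, i =>
      node (((List.finRange n).filter (fun j => decide (p j = i ∧ i < j))).map
        (shapeAux n p fuel))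

/-- The plane tree encoded by a parent function (rooted at node `0`). -/
def shapeOf {n : ℕ} (p : Fin n → Fin n) : PTree :=
  if h : 0 < n then shapeAux n p n ⟨0, h⟩ else node []

/-- `alpha t` is the number of rooted labelled (increasing) trees of shape `t`:
labelled trees are encoded by their parent function, the root carrying the
label `0` and labels increasing away from the root. -/
noncomputable def alpha (t : PTree) : ℕ :=
  Nat.card {p : Fin t.size → Fin t.size //
    p ⟨0, t.size_pos⟩ = ⟨0, t.size_pos⟩ ∧
    (∀ j : Fin t.size, 0 < (j : ℕ) → (p j : ℕ) < j) ∧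
    ShapeEq (shapeOf p) t}

/-- `kappa t` is the number of rooted plane trees of shape `t`. -/
noncomputable def kappa (t : PTree) : ℕ := Nat.card {t' : PTree // ShapeEq t' t}

/-- symmetry factor: `σ(B₊(t₁^{n₁},…,t_m^{n_m})) = ∏ᵢ nᵢ! σ(tᵢ)^{nᵢ}`. -/
noncomputable def sym : PTree → ℕ
  | node l =>
      (∏ j : Fin l.length,
        (l.take ((j : ℕ) + 1)).countP (fun c => decide (ShapeEq c (l.get j)))) *
      (l.attach.map (fun c => sym c.1)).prod
decreasing_by
  have := List.sizeOf_lt_of_mem c.2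
  simp only [node.sizeOf_spec]; omega

/-- elementary differentials: `δ_• = 1`, `δ_t = k! ψ_k ∏ᵢ δ_{tᵢ}`. -/
def delta (ψ : ℕ → ℝ) : PTree → ℝ
  | node l =>
      (Nat.factorial l.length : ℝ) * ψ l.length *
      (l.attach.map (fun c => delta ψ c.1)).prod
decreasing_by
  have := List.sizeOf_lt_of_mem c.2
  simp only [node.sizeOf_spec]; omega

/-- bare Green function with weights `B`: `B(t) = B_{|t|} ∏ᵢ B(tᵢ)`. -/
def bare (B : ℕ → ℝ) : PTree → ℝ
  | node l => B (size (node l)) * (l.attach.map (fun c => bare B c.1)).prod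
decreasing_by
  have := List.sizeOf_lt_of_mem c.2
  simp only [node.sizeOf_spec]; omega

/-- `wt ψ t = ∏_{v ∈ t} ψ (d v)` where `d v` is the outdegree of `v`. -/
def wt (ψ : ℕ → ℝ) : PTree → ℝ
  | node l => ψ l.length * (l.attach.map (fun c => wt ψ c.1)).prod
decreasing_by
  have := List.sizeOf_lt_of_mem c.2
  simp only [node.sizeOf_spec]; omega

/-- `nodeProd B t = ∏_{w ≠ root} B_{|t_w|}`, product over non-root nodes of `t`. -/
def nodeProd (B : ℕ → ℝ) : PTree → ℝ
  | node l => (l.attach.map (fun c => B (size c.1) * nodeProd B c.1)).prod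
decreasing_by
  have := List.sizeOf_lt_of_mem c.2
  simp only [node.sizeOf_spec]; omega

/-- `R` is a set of representatives of the rooted trees with `n` nodes:
every plane tree of size `n` is shape-equivalent to exactly one member of `R`. -/
def IsTransversal (n : ℕ) (R : Finset PTree) : Prop :=
  (∀ t ∈ R, size t = n) ∧
  ∀ t : PTree, size t = n → ∃! u, u ∈ R ∧ ShapeEq t u

end PTree

open Finset

namespace RecursiveTree

variable {n : ℕ}

/-- Recursive (increasing) trees on `Fin n`, rooted at `0`, as parent functions. -/
structure IsRecursive (p : Fin n → Fin n) : Prop where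
  map_root : ∀ j : Fin n, (j : ℕ) = 0 → p j = j
  parent_lt : ∀ j : Fin n, 0 < (j : ℕ) → (p j : ℕ) < j

def IsAncestor (p : Fin n → Fin n) (i j : Fin n) : Prop := ∃ k, p^[k] j = i

variable {p : Fin n → Fin n}

lemma IsRecursive.parent_le (hp : IsRecursive p) (j : Fin n) : (p j : ℕ) ≤ j := by
  rcases Nat.eq_zero_or_pos (j : ℕ) with h | h
  · rw [hp.map_root j h]
  · exact (hp.parent_lt j h).le

lemma IsRecursive.iterate_le_sub (hp : IsRecursive p) (k : ℕ) (j : Fin n) :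
    (p^[k] j : ℕ) ≤ j - k := by
  induction k with
  | zero => simp
  | succ k ih =>
    rw [Function.iterate_succ_apply']
    rcases Nat.eq_zero_or_pos (p^[k] j : ℕ) with h | h
    · rw [hp.map_root _ h]; omega
    · have := hp.parent_lt _ h; omega

lemma IsAncestor.le (hp : IsRecursive p) {i j : Fin n} (h : IsAncestor p i j) :
    (i : ℕ) ≤ j := by
  obtain ⟨k, rfl⟩ := h
  exact (hp.iterate_le_sub k j).trans (Nat.sub_le _ _)

@[refl] lemma IsAncestor.refl (i : Fin n) : IsAncestor p i i := ⟨0, rfl⟩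

lemma IsAncestor.trans {i j k : Fin n} (hij : IsAncestor p i j) (hjk : IsAncestor p j k) :
    IsAncestor p i k := by
  obtain ⟨a, rfl⟩ := hij
  obtain ⟨b, rfl⟩ := hjk
  exact ⟨a + b, Function.iterate_add_apply p a b k⟩

lemma IsAncestor.antisymm (hp : IsRecursive p) {i j : Fin n} (hij : IsAncestor p i j)
    (hji : IsAncestor p j i) : i = j :=
  Fin.ext ((hij.le hp).antisymm (hji.le hp))

lemma IsAncestor.total {u v j : Fin n} (hu : IsAncestor p u j) (hv : IsAncestor p v j) :
    IsAncestor p u v ∨ IsAncestor p v u := by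
  obtain ⟨a, rfl⟩ := hu
  obtain ⟨b, rfl⟩ := hv
  rcases le_total a b with h | h
  · right
    refine ⟨b - a, ?_⟩
    rw [← Function.iterate_add_apply, Nat.sub_add_cancel h]
  · left
    refine ⟨a - b, ?_⟩
    rw [← Function.iterate_add_apply, Nat.sub_add_cancel h]

lemma IsRecursive.isAncestor_zero (hp : IsRecursive p) (hn : 0 < n) (j : Fin n) :
    IsAncestor p ⟨0, hn⟩ j :=
  ⟨j, Fin.ext (by have := hp.iterate_le_sub j j; simp_all)⟩

noncomputable def subtree (p : Fin n → Fin n) (i : Fin n) : Finset (Fin n) :=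
  univ.filter (IsAncestor p i)

noncomputable def subtreeSize (p : Fin n → Fin n) (i : Fin n) : ℕ := #(subtree p i)

def children (p : Fin n → Fin n) (i : Fin n) : Finset (Fin n) :=
  univ.filter (fun c => p c = i ∧ i < c)

@[simp] lemma mem_subtree {i j : Fin n} : j ∈ subtree p i ↔ IsAncestor p i j := by
  simp [subtree]

@[simp] lemma mem_children {i c : Fin n} : c ∈ children p i ↔ p c = i ∧ i < c := by
  simp [children]

lemma subtreeSize_pos (i : Fin n) : 0 < subtreeSize p i :=
  card_pos.2 ⟨i, mem_subtree.2 (IsAncestor.refl i)⟩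

lemma IsRecursive.subtree_zero (hp : IsRecursive p) (hn : 0 < n) :
    subtree p ⟨0, hn⟩ = univ := by
  ext j
  simp [hp.isAncestor_zero hn j]

lemma IsRecursive.subtreeSize_zero (hp : IsRecursive p) (hn : 0 < n) :
    subtreeSize p ⟨0, hn⟩ = n := by
  rw [subtreeSize, hp.subtree_zero hn, card_univ, Fintype.card_fin]

lemma isAncestor_of_mem_children {i c : Fin n} (hc : c ∈ children p i) : IsAncestor p i c :=
  ⟨1, (mem_children.1 hc).1⟩

/-- The child is the last node before `i` on the way up from `j`. -/
lemma exists_mem_children_isAncestor (hp : IsRecursive p) {i j : Fin n}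
    (h : IsAncestor p i j) (hne : j ≠ i) : ∃ c ∈ children p i, IsAncestor p c j := by
  have hex : ∃ k, p^[k] j = i := h
  have hk : p^[Nat.find hex] j = i := Nat.find_spec hex
  have hk0 : Nat.find hex ≠ 0 := fun h0 => hne (by rwa [h0] at hk)
  obtain ⟨m, hm⟩ := Nat.exists_eq_succ_of_ne_zero hk0
  rw [hm, Function.iterate_succ_apply'] at hk
  have hne' : p^[m] j ≠ i := fun h' => Nat.find_min hex (hm ▸ Nat.lt_succ_self m) h'
  refine ⟨p^[m] j, mem_children.2 ⟨hk, ?_⟩, ⟨m, rfl⟩⟩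
  rcases Nat.eq_zero_or_pos (p^[m] j : ℕ) with h0 | h0
  · exact absurd (hp.map_root _ h0 ▸ hk) hne'
  · exact hk ▸ hp.parent_lt _ h0

lemma not_isAncestor_of_mem_children (hp : IsRecursive p) {i c : Fin n}
    (hc : c ∈ children p i) : ¬IsAncestor p c i :=
  fun h => (mem_children.1 hc).2.not_ge (h.le hp)

lemma IsAncestor.eq_of_mem_children (hp : IsRecursive p) {i c c' : Fin n}
    (hc : c ∈ children p i) (hc' : c' ∈ children p i) (h : IsAncestor p c c') : c = c' := by
  obtain ⟨_ | k, hk⟩ := h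
  · exact hk.symm
  · rw [Function.iterate_succ_apply, (mem_children.1 hc').1] at hk
    exact absurd ⟨k, hk⟩ (not_isAncestor_of_mem_children hp hc)

lemma pairwiseDisjoint_subtree_children (hp : IsRecursive p) (i : Fin n) :
    (children p i : Set (Fin n)).PairwiseDisjoint (subtree p) := by
  intro c hc c' hc' hne
  refine disjoint_left.2 fun j hj hj' => hne ?_
  rcases (mem_subtree.1 hj).total (mem_subtree.1 hj') with h | h
  · exact h.eq_of_mem_children hp hc hc'
  · exact (h.eq_of_mem_children hp hc' hc).symm

lemma subtree_eq_insert_biUnion (hp : IsRecursive p) (i : Fin n) :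
    subtree p i = insert i ((children p i).biUnion (subtree p)) := by
  ext j
  simp only [mem_insert, mem_biUnion, mem_subtree]
  constructor
  · intro h
    by_cases hji : j = i
    · exact Or.inl hji
    · exact Or.inr (exists_mem_children_isAncestor hp h hji)
  · rintro (rfl | ⟨c, hc, hcj⟩)
    · rfl
    · exact (isAncestor_of_mem_children hc).trans hcj

lemma notMem_biUnion_subtree_children (hp : IsRecursive p) (i : Fin n) :
    i ∉ (children p i).biUnion (subtree p) := by
  simp only [mem_biUnion, mem_subtree, not_exists, not_and]
  exact fun c hc => not_isAncestor_of_mem_children hp hc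

lemma prod_subtree {M : Type*} [CommMonoid M] (hp : IsRecursive p) (i : Fin n) (f : Fin n → M) :
    ∏ j ∈ subtree p i, f j = f i * ∏ c ∈ children p i, ∏ j ∈ subtree p c, f j := by
  rw [subtree_eq_insert_biUnion hp i, prod_insert (notMem_biUnion_subtree_children hp i),
    prod_biUnion (pairwiseDisjoint_subtree_children hp i)]

lemma subtreeSize_eq (hp : IsRecursive p) (i : Fin n) :
    subtreeSize p i = 1 + ∑ c ∈ children p i, subtreeSize p c := by
  rw [subtreeSize, subtree_eq_insert_biUnion hp i,
    card_insert_of_notMem (notMem_biUnion_subtree_children hp i),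
    card_biUnion (pairwiseDisjoint_subtree_children hp i), add_comm]
  rfl

lemma subtreeSize_lt_of_mem_children (hp : IsRecursive p) {i c : Fin n}
    (hc : c ∈ children p i) : subtreeSize p c < subtreeSize p i := by
  rw [subtreeSize_eq hp i, Nat.lt_one_add_iff]
  exact single_le_sum (fun _ _ => Nat.zero_le _) hc

noncomputable def path (p : Fin n → Fin n) (i k : Fin n) : Finset (Fin n) :=
  univ.filter fun u => IsAncestor p i u ∧ IsAncestor p u k

/-- Attaching a new leaf below `k` raises by one exactly the subtree sizes along the path from
the root to `k`; for `i` the root this is the factor by which the inverse tree factorial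
changes. -/
noncomputable def pathRatio (p : Fin n → Fin n) (i k : Fin n) : ℝ :=
  ∏ u ∈ path p i k, (subtreeSize p u : ℝ) / (subtreeSize p u + 1)

@[simp] lemma mem_path {i k u : Fin n} :
    u ∈ path p i k ↔ IsAncestor p i u ∧ IsAncestor p u k := by
  simp [path]

lemma path_self (hp : IsRecursive p) (i : Fin n) : path p i i = {i} := by
  ext u
  simp only [mem_path, mem_singleton]
  constructor
  · rintro ⟨hiu, hui⟩
    exact hui.antisymm hp hiu
  · rintro rfl
    exact ⟨.refl u, .refl u⟩

lemma path_eq_insert_of_mem_children (hp : IsRecursive p) {i c k : Fin n}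
    (hc : c ∈ children p i) (hck : IsAncestor p c k) :
    path p i k = insert i (path p c k) := by
  have hic := isAncestor_of_mem_children hc
  ext u
  simp only [mem_path, mem_insert]
  constructor
  · rintro ⟨hiu, huk⟩
    rcases huk.total hck with ⟨_ | m, hm⟩ | hcu
    · exact Or.inr ⟨⟨0, hm.symm⟩, huk⟩
    · rw [Function.iterate_succ_apply, (mem_children.1 hc).1] at hm
      exact Or.inl (hiu.antisymm hp ⟨m, hm⟩).symm
    · exact Or.inr ⟨hcu, huk⟩
  · rintro (rfl | ⟨hcu, huk⟩)
    · exact ⟨.refl u, hic.trans hck⟩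
    · exact ⟨hic.trans hcu, huk⟩

lemma pathRatio_of_mem_children (hp : IsRecursive p) {i c k : Fin n}
    (hc : c ∈ children p i) (hck : IsAncestor p c k) :
    pathRatio p i k = (subtreeSize p i : ℝ) / (subtreeSize p i + 1) * pathRatio p c k := by
  have hi : i ∉ path p c k := fun h =>
    not_isAncestor_of_mem_children hp hc (mem_path.1 h).1
  rw [pathRatio, path_eq_insert_of_mem_children hp hc hck, prod_insert hi]
  rfl

/-- With `s = subtreeSize p`, the children of `i` contribute `s(i)/(s(i)+1) · (s(i) - 1)/2` by
induction, and `k = i` contributes `s(i)/(s(i)+1)`. -/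
lemma sum_pathRatio_subtree (hp : IsRecursive p) (i : Fin n) :
    ∑ k ∈ subtree p i, pathRatio p i k = (subtreeSize p i : ℝ) / 2 := by
  induction hi : subtreeSize p i using Nat.strong_induction_on generalizing i with
  | _ m ih =>
    subst hi
    have hchild : ∀ c ∈ children p i, ∑ k ∈ subtree p c, pathRatio p i k =
        (subtreeSize p i : ℝ) / (subtreeSize p i + 1) * ((subtreeSize p c : ℝ) / 2) := by
      intro c hc
      rw [sum_congr rfl fun k hk => pathRatio_of_mem_children hp hc (mem_subtree.1 hk),
        ← mul_sum, ih _ (subtreeSize_lt_of_mem_children hp hc) c rfl]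
    have hsize : ∑ c ∈ children p i, (subtreeSize p c : ℝ) = subtreeSize p i - 1 := by
      rw [subtreeSize_eq hp i]; push_cast; ring
    have hpos : (0 : ℝ) < subtreeSize p i := by exact_mod_cast subtreeSize_pos i
    rw [subtree_eq_insert_biUnion hp i, sum_insert (notMem_biUnion_subtree_children hp i),
      sum_biUnion (pairwiseDisjoint_subtree_children hp i), sum_congr rfl hchild, ← mul_sum,
      ← sum_div, hsize, pathRatio, path_self hp, prod_singleton]
    field_simp
    ring

noncomputable def treeFactorial (p : Fin n → Fin n) : ℕ := ∏ i, subtreeSize p i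

def addLeaf (p : Fin n → Fin n) (k : Fin n) : Fin (n + 1) → Fin (n + 1) :=
  Fin.lastCases k.castSucc fun j => (p j).castSucc

@[simp] lemma addLeaf_castSucc (k j : Fin n) : addLeaf p k j.castSucc = (p j).castSucc :=
  Fin.lastCases_castSucc j

@[simp] lemma addLeaf_last (k : Fin n) : addLeaf p k (Fin.last n) = k.castSucc :=
  Fin.lastCases_last

lemma addLeaf_iterate_castSucc (k j : Fin n) (m : ℕ) :
    (addLeaf p k)^[m] j.castSucc = (p^[m] j).castSucc := by
  induction m with
  | zero => rfl
  | succ m ih =>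
    rw [Function.iterate_succ_apply', ih, addLeaf_castSucc, ← Function.iterate_succ_apply' p]

lemma IsRecursive.addLeaf (hp : IsRecursive p) (hn : 0 < n) (k : Fin n) :
    IsRecursive (addLeaf p k) where
  map_root j hj := by
    induction j using Fin.lastCases with
    | last => simp only [Fin.val_last] at hj; omega
    | cast j => simpa using hp.map_root j (by simpa using hj)
  parent_lt j hj := by
    induction j using Fin.lastCases with
    | last => simp
    | cast j => simpa using hp.parent_lt j (by simpa using hj)

lemma isAncestor_addLeaf_castSucc_iff {k i j : Fin n} :
    IsAncestor (addLeaf p k) i.castSucc j.castSucc ↔ IsAncestor p i j := by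
  simp only [IsAncestor, addLeaf_iterate_castSucc, Fin.castSucc_inj]

lemma isAncestor_addLeaf_last_iff {k i : Fin n} :
    IsAncestor (addLeaf p k) i.castSucc (Fin.last n) ↔ IsAncestor p i k := by
  constructor
  · rintro ⟨_ | m, hm⟩
    · exact absurd hm.symm (Fin.castSucc_lt_last i).ne
    · rw [Function.iterate_succ_apply, addLeaf_last, addLeaf_iterate_castSucc,
        Fin.castSucc_inj] at hm
      exact ⟨m, hm⟩
  · rintro ⟨m, hm⟩
    exact ⟨m + 1, by
      rw [Function.iterate_succ_apply, addLeaf_last, addLeaf_iterate_castSucc, hm]⟩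

lemma subtreeSize_addLeaf_castSucc (k i : Fin n) :
    subtreeSize (addLeaf p k) i.castSucc =
      subtreeSize p i + if IsAncestor p i k then 1 else 0 := by
  simp only [subtreeSize, subtree, card_filter, Fin.sum_univ_castSucc,
    isAncestor_addLeaf_castSucc_iff, isAncestor_addLeaf_last_iff]

lemma subtreeSize_addLeaf_last (hp : IsRecursive p) (hn : 0 < n) (k : Fin n) :
    subtreeSize (addLeaf p k) (Fin.last n) = 1 := by
  have hnot : ∀ j : Fin n, ¬IsAncestor (addLeaf p k) (Fin.last n) j.castSucc := fun j h =>
    (Fin.castSucc_lt_last j).not_ge (h.le (hp.addLeaf hn k))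
  rw [subtreeSize, subtree, card_filter, Fin.sum_univ_castSucc]
  simp [hnot, IsAncestor.refl]

lemma IsRecursive.path_zero (hp : IsRecursive p) (hn : 0 < n) (k : Fin n) :
    path p ⟨0, hn⟩ k = univ.filter (IsAncestor p · k) := by
  ext u
  simp [hp.isAncestor_zero hn u]

lemma inv_treeFactorial_addLeaf (hp : IsRecursive p) (hn : 0 < n) (k : Fin n) :
    (treeFactorial (addLeaf p k) : ℝ)⁻¹ = pathRatio p ⟨0, hn⟩ k / treeFactorial p := by
  set s : Fin n → ℝ := fun u => subtreeSize p u
  set A : Finset (Fin n) := {u ∈ univ | IsAncestor p u k}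
  set B : Finset (Fin n) := {u ∈ univ | ¬IsAncestor p u k}
  have hs : ∀ u, 0 < s u := fun u => by simp only [s]; exact_mod_cast subtreeSize_pos u
  have hext :
      (treeFactorial (addLeaf p k) : ℝ) = (∏ u ∈ A, (s u + 1)) * ∏ u ∈ B, s u := by
    rw [← prod_ite, treeFactorial, Fin.prod_univ_castSucc, subtreeSize_addLeaf_last hp hn,
      mul_one]
    push_cast
    refine prod_congr rfl fun u _ => ?_
    rw [subtreeSize_addLeaf_castSucc]
    split_ifs <;> simp [s]
  have hp' : (treeFactorial p : ℝ) = (∏ u ∈ A, s u) * ∏ u ∈ B, s u := by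
    rw [prod_filter_mul_prod_filter_not, treeFactorial]
    push_cast
    rfl
  have hratio : pathRatio p ⟨0, hn⟩ k = (∏ u ∈ A, s u) / ∏ u ∈ A, (s u + 1) := by
    rw [pathRatio, hp.path_zero hn, prod_div_distrib]
  have hA : 0 < ∏ u ∈ A, (s u + 1) := prod_pos fun u _ => by linarith [hs u]
  have hA' : 0 < ∏ u ∈ A, s u := prod_pos fun u _ => hs u
  have hB : 0 < ∏ u ∈ B, s u := prod_pos fun u _ => hs u
  rw [hext, hp', hratio]
  field_simp

lemma sum_inv_treeFactorial_addLeaf (hp : IsRecursive p) (hn : 0 < n) :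
    ∑ k, (treeFactorial (addLeaf p k) : ℝ)⁻¹ = n / 2 * (treeFactorial p : ℝ)⁻¹ := by
  rw [sum_congr rfl fun k _ => inv_treeFactorial_addLeaf hp hn k, ← sum_div,
    ← hp.subtree_zero hn, sum_pathRatio_subtree hp, hp.subtreeSize_zero hn, div_eq_mul_inv]

noncomputable def recursiveTrees (n : ℕ) : Finset (Fin n → Fin n) := univ.filter IsRecursive

@[simp] lemma mem_recursiveTrees {q : Fin n → Fin n} :
    q ∈ recursiveTrees n ↔ IsRecursive q := by
  simp [recursiveTrees]

lemma addLeaf_injective :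
    Function.Injective fun x : (Fin n → Fin n) × Fin n => addLeaf x.1 x.2 := by
  rintro ⟨p, k⟩ ⟨p', k'⟩ h
  have hp : p = p' := funext fun j => Fin.castSucc_injective n (by
    simpa using congrFun h j.castSucc)
  have hk : k = k' := Fin.castSucc_injective n (by simpa using congrFun h (Fin.last n))
  rw [hp, hk]

/-- Deleting the leaf `n`, the node with the largest label, inverts `addLeaf`. -/
lemma exists_addLeaf_eq {q : Fin (n + 1) → Fin (n + 1)} (hq : IsRecursive q)
    (hn : 0 < n) : ∃ (p : Fin n → Fin n) (k : Fin n), IsRecursive p ∧ addLeaf p k = q := by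
  have hlt : ∀ j : Fin n, (q j.castSucc : ℕ) < n := fun j =>
    (hq.parent_le j.castSucc).trans_lt j.isLt
  have hlast : (q (Fin.last n) : ℕ) < n := hq.parent_lt _ hn
  refine ⟨fun j => (q j.castSucc).castLT (hlt j), (q (Fin.last n)).castLT hlast,
    ⟨?_, ?_⟩, ?_⟩
  · intro j hj
    exact Fin.ext (by simpa using congrArg Fin.val (hq.map_root j.castSucc hj))
  · exact fun j hj => hq.parent_lt j.castSucc hj
  · funext j
    induction j using Fin.lastCases <;> simp

lemma sum_recursiveTrees_succ {M : Type*} [AddCommMonoid M] (hn : 0 < n)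
    (f : (Fin (n + 1) → Fin (n + 1)) → M) :
    ∑ q ∈ recursiveTrees (n + 1), f q = ∑ p ∈ recursiveTrees n, ∑ k, f (addLeaf p k) := by
  rw [← sum_product', eq_comm]
  refine sum_bij (fun x _ => addLeaf x.1 x.2) ?_ (fun x _ y _ h => addLeaf_injective h) ?_
    fun _ _ => rfl
  · rintro ⟨p, k⟩ hx
    exact mem_recursiveTrees.2 ((mem_recursiveTrees.1 (mem_product.1 hx).1).addLeaf hn k)
  · intro q hq
    obtain ⟨p, k, hp, rfl⟩ := exists_addLeaf_eq (mem_recursiveTrees.1 hq) hn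
    exact ⟨(p, k), mem_product.2 ⟨mem_recursiveTrees.2 hp, mem_univ k⟩, rfl⟩

lemma sum_inv_treeFactorial_one :
    ∑ p ∈ recursiveTrees 1, (treeFactorial p : ℝ)⁻¹ = 1 := by
  have htf : ∀ p ∈ recursiveTrees 1, treeFactorial p = 1 := fun p hp => by
    rw [treeFactorial, Fin.prod_univ_one]
    exact (mem_recursiveTrees.1 hp).subtreeSize_zero one_pos
  have hall : recursiveTrees 1 = univ :=
    eq_univ_of_forall fun p => mem_recursiveTrees.2
      ⟨fun j _ => Subsingleton.elim _ _, fun j hj => absurd j.isLt (by omega)⟩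
  rw [sum_congr rfl fun p hp => by rw [htf p hp], hall]
  simp

theorem sum_inv_treeFactorial (hn : 0 < n) :
    ∑ p ∈ recursiveTrees n, (treeFactorial p : ℝ)⁻¹ =
      (n - 1).factorial / 2 ^ (n - 1) := by
  induction n, hn using Nat.le_induction with
  | base => simpa using sum_inv_treeFactorial_one
  | succ n hn ih =>
    rw [sum_recursiveTrees_succ hn,
      sum_congr rfl fun p hp => sum_inv_treeFactorial_addLeaf (mem_recursiveTrees.1 hp) hn,
      ← mul_sum, ih]
    obtain ⟨m, rfl⟩ : ∃ m, n = m + 1 := ⟨n - 1, by omega⟩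
    simp only [Nat.add_sub_cancel, Nat.factorial_succ, pow_succ]
    push_cast
    field_simp

def childList (p : Fin n → Fin n) (i : Fin n) : List (Fin n) :=
  (List.finRange n).filter fun j => decide (p j = i ∧ i < j)

lemma nodup_childList (p : Fin n → Fin n) (i : Fin n) : (childList p i).Nodup :=
  (List.nodup_finRange n).filter _

lemma toFinset_childList (p : Fin n → Fin n) (i : Fin n) :
    (childList p i).toFinset = children p i := by
  ext c
  simp [childList]

lemma children_eq_empty_of_le {i : Fin n} (hi : n ≤ i + 1) : children p i = ∅ :=
  eq_empty_of_forall_notMem fun c hc => by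
    have := (mem_children.1 hc).2
    omega

end RecursiveTree

namespace PTree

open RecursiveTree

lemma size_node (l : List PTree) : size (node l) = 1 + (l.map size).sum := by
  rw [size, List.attach_map_val]

lemma tfact_node (l : List PTree) : tfact (node l) = size (node l) * (l.map tfact).prod := by
  rw [tfact, List.attach_map_val]

lemma ShapeEq.size_eq {a b : PTree} (h : ShapeEq a b) : size a = size b := by
  induction h with
  | @node l₁ l₂ e _ ih =>
    rw [size_node, size_node, ← Fin.sum_univ_fun_getElem, ← Fin.sum_univ_fun_getElem]
    exact congrArg (1 + ·)
      ((sum_congr rfl fun i _ => ih i).trans (e.sum_comp fun j => size (l₂.get j)))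

lemma ShapeEq.tfact_eq {a b : PTree} (h : ShapeEq a b) : tfact a = tfact b := by
  induction h with
  | @node l₁ l₂ e h ih =>
    rw [tfact_node, tfact_node, (ShapeEq.node e h).size_eq, ← Fin.prod_univ_fun_getElem,
      ← Fin.prod_univ_fun_getElem]
    exact congrArg (_ * ·)
      ((prod_congr rfl fun i _ => ih i).trans (e.prod_comp fun j => tfact (l₂.get j)))

variable {n : ℕ} {p : Fin n → Fin n}

lemma shapeAux_succ (fuel : ℕ) (i : Fin n) :
    shapeAux n p (fuel + 1) i = node ((childList p i).map (shapeAux n p fuel)) :=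
  rfl

/-- `n ≤ fuel + i + 1` suffices since labels strictly increase from a node to its children. -/
lemma size_shapeAux (hp : IsRecursive p) (fuel : ℕ) (i : Fin n) (hfuel : n ≤ fuel + i + 1) :
    size (shapeAux n p fuel i) = subtreeSize p i := by
  induction fuel generalizing i with
  | zero =>
    rw [subtreeSize_eq hp, children_eq_empty_of_le (by omega), sum_empty]
    simp [shapeAux, size_node]
  | succ fuel ih =>
    rw [shapeAux_succ, size_node, List.map_map, ← List.sum_toFinset _ (nodup_childList p i),
      toFinset_childList, subtreeSize_eq hp]
    exact congrArg (1 + ·) (sum_congr rfl fun c hc =>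
      ih c (by have := (mem_children.1 hc).2; omega))

lemma tfact_shapeAux (hp : IsRecursive p) (fuel : ℕ) (i : Fin n) (hfuel : n ≤ fuel + i + 1) :
    tfact (shapeAux n p fuel i) = ∏ j ∈ subtree p i, subtreeSize p j := by
  induction fuel generalizing i with
  | zero =>
    rw [prod_subtree hp, children_eq_empty_of_le (by omega), prod_empty, mul_one,
      ← size_shapeAux hp 0 i hfuel]
    simp [shapeAux, tfact_node]
  | succ fuel ih =>
    rw [shapeAux_succ, tfact_node, ← shapeAux_succ, size_shapeAux hp _ i hfuel, List.map_map,
      ← List.prod_toFinset _ (nodup_childList p i), toFinset_childList, prod_subtree hp]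
    exact congrArg (_ * ·) (prod_congr rfl fun c hc =>
      ih c (by have := (mem_children.1 hc).2; omega))

lemma size_shapeOf (hp : IsRecursive p) (hn : 0 < n) : size (shapeOf p) = n := by
  rw [shapeOf, dif_pos hn, size_shapeAux hp n _ (by omega), hp.subtreeSize_zero hn]

lemma tfact_shapeOf (hp : IsRecursive p) (hn : 0 < n) : tfact (shapeOf p) = treeFactorial p := by
  rw [shapeOf, dif_pos hn, tfact_shapeAux hp n _ (by omega), hp.subtree_zero hn, treeFactorial]

lemma alpha_eq_card (t : PTree) :
    alpha t = #{p ∈ recursiveTrees t.size | ShapeEq (shapeOf p) t} := by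
  rw [alpha, Nat.card_eq_fintype_card, Fintype.card_subtype]
  congr 1
  ext p
  simp only [mem_filter, mem_univ, true_and, mem_recursiveTrees]
  constructor
  · rintro ⟨h0, hlt, hshape⟩
    exact ⟨⟨fun j hj => (Fin.ext hj : j = ⟨0, t.size_pos⟩) ▸ h0, hlt⟩, hshape⟩
  · rintro ⟨hp, hshape⟩
    exact ⟨hp.map_root _ rfl, hp.parent_lt, hshape⟩

lemma alpha_div_tfact (t : PTree) : (alpha t : ℝ) / tfact t =
    ∑ p ∈ recursiveTrees t.size with ShapeEq (shapeOf p) t, (treeFactorial p : ℝ)⁻¹ := by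
  have htf : ∀ p ∈ {p ∈ recursiveTrees t.size | ShapeEq (shapeOf p) t},
      treeFactorial p = tfact t := fun p hp => by
    rw [mem_filter, mem_recursiveTrees] at hp
    rw [← tfact_shapeOf hp.1 t.size_pos, hp.2.tfact_eq]
  rw [sum_congr rfl fun p hp => by rw [htf p hp], sum_const, alpha_eq_card, nsmul_eq_mul,
    div_eq_mul_inv]

lemma IsTransversal.sum_sum_filter_shapeEq {R : Finset PTree} (hR : IsTransversal n R)
    {α M : Type*} [AddCommMonoid M] (s : Finset α) (g : α → PTree)
    (hg : ∀ a ∈ s, size (g a) = n) (f : α → M) :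
    ∑ t ∈ R, ∑ a ∈ s with ShapeEq (g a) t, f a = ∑ a ∈ s, f a := by
  rw [sum_comm' (t' := s) (s' := fun a => {t ∈ R | ShapeEq (g a) t})
    (fun t a => by simp only [mem_filter]; tauto)]
  refine sum_congr rfl fun a ha => ?_
  obtain ⟨u, ⟨huR, hu⟩, huniq⟩ := hR.2 (g a) (hg a ha)
  have hfilter : {t ∈ R | ShapeEq (g a) t} = {u} := by
    ext t
    simp only [mem_filter, mem_singleton]
    exact ⟨huniq t, fun ht => ht ▸ ⟨huR, hu⟩⟩
  rw [hfilter, sum_singleton]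

end PTree

open RecursiveTree

open PTree in
/-- For every `n ≥ 1`, `∑_{t∈ℛₙ} α(t)/t! = (n−1)!/2^{n−1}`, the sum being
over a set `R` of representatives of the rooted trees with `n` nodes. -/
theorem sum_alpha_div_tfact (n : ℕ) (hn : 1 ≤ n)
    (R : Finset PTree) (hR : IsTransversal n R) :
    ∑ t ∈ R, (alpha t : ℝ) / (tfact t : ℝ) =
      (Nat.factorial (n - 1) : ℝ) / 2 ^ (n - 1) := by
  calc ∑ t ∈ R, (alpha t : ℝ) / (tfact t : ℝ)
      = ∑ t ∈ R, ∑ p ∈ recursiveTrees n with ShapeEq (shapeOf p) t,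
          (treeFactorial p : ℝ)⁻¹ :=
        sum_congr rfl fun t ht => by rw [alpha_div_tfact, hR.1 t ht]
    _ = ∑ p ∈ recursiveTrees n, (treeFactorial p : ℝ)⁻¹ :=
        hR.sum_sum_filter_shapeEq _ _ (fun p hp => size_shapeOf (mem_recursiveTrees.1 hp) hn) _
    _ = (Nat.factorial (n - 1) : ℝ) / 2 ^ (n - 1) := sum_inv_treeFactorial hn
end

section
/- Let Y₀(s) := ∑_{n≥0} (n^n/(n+1)!)·s^{n+1} (with 0⁰ = 1) as a formal power series. Then W(s) := s/(1 − Y₀(s)) is a well-defined formal power series with zero constant term, and it satisfies W(s)·exp(−W(s)) = s; i.e., W is the compositional inverse of G(z) = z·e^{−z}. -/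
/-!
The series `Y₀ = ∑ nⁿ sⁿ⁺¹/(n+1)!` satisfies `Y₀' (1 - s - Y₀) = 1 - Y₀`; comparing coefficients,
this is Abel's identity `∑ₖ C(n,k) x (x+k)ᵏ⁻¹ (y+n-k)ⁿ⁻ᵏ = (x+y+n)ⁿ` at `x = -1`, `y = 0`.
For `F = 1 - Y₀` and `W = s/F` the equation turns into the linear equation `F' = -W' F`, which
`exp(-W)` satisfies as well. Both series have constant term `1`, so `exp(-W) = F` and
`W exp(-W) = W F = s`.
-/

open Finset PowerSeries
open scoped Nat

theorem Nat.succ_choose_succ_mul_choose_sub {N p j : ℕ} (h : j ≤ p) :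
    (N + 1).choose (j + 1) * (N - j).choose (p - j) =
      (N + 1).choose (p + 1) * (p + 1).choose (j + 1) := by
  have := Nat.choose_mul (n := N + 1) (Nat.succ_le_succ h)
  simp only [Nat.succ_sub_succ] at this
  exact this.symm

section Abel

variable {R : Type*} [CommRing R]

theorem sum_choose_succ_mul_neg_one_pow_mul_add_succ_pow (x : R) (p : ℕ) :
    ∑ j ∈ range (p + 1), ((p + 1).choose (j + 1) : R) * (-1) ^ (p - j) * (x + j + 1) ^ p =
      (-1) ^ p * x ^ p := by
  have h := congr_fun (fwdDiff_iter_pow_eq_zero_of_lt (R := R) (Nat.lt_succ_self p)) x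
  rw [fwdDiff_iter_eq_sum_shift, sum_range_succ'] at h
  simp only [zsmul_eq_mul, nsmul_eq_mul, Nat.choose_zero_right, Nat.succ_sub_succ,
    Nat.succ_eq_add_one, Pi.zero_apply] at h
  push_cast at h
  simp only [mul_one, add_zero, ← add_assoc, mul_comm ((-1 : R) ^ _)] at h
  linear_combination h

/-- Abel's identity, with the term `k = 0` moved to the right-hand side. Writing
`y + i = z - (x + j + 1)` for `z = x + y + N + 1` and expanding, the coefficient of `z ^ (N - p)`
is a `(p + 1)`-st finite difference of a polynomial of degree `p`, up to its first term. -/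
theorem sum_antidiagonal_abel (x y : R) (N : ℕ) :
    ∑ q ∈ antidiagonal N,
        ((N + 1).choose (q.1 + 1) : R) * x * (x + q.1 + 1) ^ q.1 * (y + q.2) ^ q.2 =
      (x + y + N + 1) ^ (N + 1) - (y + N + 1) ^ (N + 1) := by
  set z := x + y + N + 1
  have hexpand : ∀ j ∈ range (N + 1), (y + ((N - j : ℕ) : R)) ^ (N - j) =
      ∑ m ∈ range (N + 1 - j), (-(x + j + 1)) ^ m * z ^ (N - j - m) * ((N - j).choose m : R) := by
    intro j hj
    have hjN := mem_range_succ_iff.mp hj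
    rw [Nat.sub_add_comm hjN, ← add_pow, Nat.cast_sub hjN]
    congr 1
    simp only [z]
    ring
  have hregroup : ∀ p ∈ range (N + 1), ∀ j ∈ range (p + 1),
      ((N + 1).choose (j + 1) : R) * x * (x + j + 1) ^ j *
        ((-(x + j + 1)) ^ (p - j) * z ^ (N - j - (p - j)) * ((N - j).choose (p - j) : R)) =
      (N + 1).choose (p + 1) * z ^ (N - p) * x *
        ((p + 1).choose (j + 1) * (-1) ^ (p - j) * (x + j + 1) ^ p) := by
    intro p _ j hj
    have hjp := mem_range_succ_iff.mp hj
    have hchoose : ((N + 1).choose (j + 1) : R) * (N - j).choose (p - j) =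
        (N + 1).choose (p + 1) * (p + 1).choose (j + 1) := by
      rw [← Nat.cast_mul, ← Nat.cast_mul, Nat.succ_choose_succ_mul_choose_sub hjp]
    rw [show N - j - (p - j) = N - p by omega, neg_pow]
    calc _ = ((N + 1).choose (j + 1) : R) * (N - j).choose (p - j) * x * (-1) ^ (p - j) *
          ((x + j + 1) ^ j * (x + j + 1) ^ (p - j)) * z ^ (N - p) := by ring
      _ = _ := by rw [hchoose, ← pow_add, Nat.add_sub_cancel' hjp]; ring
  have hbinom : ∀ p ∈ range (N + 1), (-x) ^ (p + 1) * z ^ (N + 1 - (p + 1)) *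
      ((N + 1).choose (p + 1) : R) =
        -((N + 1).choose (p + 1) * z ^ (N - p) * x * ((-1) ^ p * x ^ p)) := by
    intro p _
    rw [Nat.add_sub_add_right, neg_pow]
    ring
  calc _ = ∑ j ∈ range (N + 1), ∑ m ∈ range (N + 1 - j),
        ((N + 1).choose (j + 1) : R) * x * (x + j + 1) ^ j *
          ((-(x + j + 1)) ^ m * z ^ (N - j - m) * ((N - j).choose m : R)) := by
        rw [Nat.sum_antidiagonal_eq_sum_range_succ
          (fun j i => ((N + 1).choose (j + 1) : R) * x * (x + j + 1) ^ j * (y + i) ^ i)]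
        refine sum_congr rfl fun j hj => ?_
        rw [hexpand j hj, mul_sum]
    _ = ∑ p ∈ range (N + 1), (N + 1).choose (p + 1) * z ^ (N - p) * x * ((-1) ^ p * x ^ p) := by
        rw [← sum_range_diag_flip]
        refine sum_congr rfl fun p hp => ?_
        rw [sum_congr rfl (hregroup p hp), ← mul_sum,
          sum_choose_succ_mul_neg_one_pow_mul_add_succ_pow]
    _ = _ := by
        rw [show y + N + 1 = -x + z by ring, add_pow (-x) z, sum_range_succ' _ (N + 1),
          sum_congr rfl hbinom, sum_neg_distrib]
        simp

end Abel

namespace PowerSeries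

theorem eq_of_derivative_eq_mul {R : Type*} [CommRing R] [IsAddTorsionFree R] {f g h : R⟦X⟧}
    (hf : d⁄dX R f = h * f) (hg : d⁄dX R g = h * g) (h0 : constantCoeff f = constantCoeff g) :
    f = g := by
  rw [← sub_eq_zero]
  have hd : d⁄dX R (f - g) = h * (f - g) := by rw [map_sub, hf, hg, mul_sub]
  ext n
  induction n using Nat.strong_induction_on with
  | _ n ih =>
    rcases n with _ | n
    · simp [h0]
    · have hlow : coeff n (h * (f - g)) = 0 := by
        rw [coeff_mul]
        exact sum_eq_zero fun q hq => by
          rw [ih q.2 (by have := mem_antidiagonal.mp hq; omega), map_zero, mul_zero]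
      rw [← hd, coeff_derivative] at hlow
      rw [map_zero]
      exact (smul_eq_zero_iff_right n.succ_ne_zero).mp
        (by rwa [nsmul_eq_mul, mul_comm, Nat.cast_succ])

variable {A : Type*} [CommRing A] [Algebra ℚ A]

theorem coeff_exp_subst {V : A⟦X⟧} (hV : constantCoeff V = 0) (n : ℕ) :
    coeff n ((exp A).subst V) =
      ∑ m ∈ range (n + 1), algebraMap ℚ A (1 / m !) * coeff n (V ^ m) := by
  rw [coeff_subst' (HasSubst.of_constantCoeff_zero' hV),
    finsum_eq_sum_of_support_subset _ (s := range (n + 1))]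
  · simp only [coeff_exp, smul_eq_mul]
  · intro m hm
    rw [coe_range, Set.mem_Iio, Nat.lt_succ_iff]
    by_contra! hnm
    refine hm ?_
    dsimp only
    rw [coeff_of_lt_order n ((by exact_mod_cast hnm : (n : ℕ∞) < m).trans_le
      (le_order_pow_of_constantCoeff_eq_zero m hV)), smul_zero]

theorem derivative_exp_subst {V : A⟦X⟧} (hV : constantCoeff V = 0) :
    d⁄dX A ((exp A).subst V) = d⁄dX A V * (exp A).subst V := by
  rw [derivative_subst (HasSubst.of_constantCoeff_zero' hV), derivative_exp, mul_comm]

end PowerSeries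

section MomentSeries

variable {K : Type*} [Field K]

theorem sum_antidiagonal_pow_self_div_factorial [CharZero K] (N : ℕ) :
    ∑ q ∈ antidiagonal N, (q.1 : K) ^ q.1 / q.1 ! * ((q.2 : K) ^ q.2 / (q.2 + 1)!) =
      (((N : K) + 1) ^ (N + 1) - (N : K) ^ (N + 1)) / (N + 1)! := by
  have habel := sum_antidiagonal_abel (-1 : K) 0 N
  rw [← Nat.sum_antidiagonal_swap] at habel
  simp only [Prod.fst_swap, Prod.snd_swap, zero_add, add_zero,
    show ∀ a : K, -1 + a + 1 = a from fun a => by ring] at habel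
  have hfac_ne (n : ℕ) : (n ! : K) ≠ 0 := Nat.cast_ne_zero.mpr n.factorial_ne_zero
  rw [eq_div_iff (hfac_ne _), sum_mul]
  calc _ = ∑ q ∈ antidiagonal N,
        -(((N + 1).choose (q.2 + 1) : K) * (-1) * (q.2 : K) ^ q.2 * (q.1 : K) ^ q.1) := by
        refine sum_congr rfl fun q hq => ?_
        have hfac := Nat.add_choose_mul_factorial_mul_factorial q.1 (q.2 + 1)
        rw [← add_assoc, mem_antidiagonal.mp hq] at hfac
        rw [← hfac]
        push_cast
        field_simp [hfac_ne]
    _ = _ := by rw [sum_neg_distrib, habel]; ring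

/-- `∑ₙ τ((TT*)ⁿ) sⁿ⁺¹ = ∑ₙ nⁿ/(n+1)! sⁿ⁺¹` for the Dykema–Haagerup (DT) operator `T`. -/
noncomputable def dtMomentSeries (K : Type*) [Field K] : K⟦X⟧ :=
  mk fun m => if m = 0 then 0 else ((m - 1 : ℕ) : K) ^ (m - 1) / (m ! : K)

@[simp]
theorem constantCoeff_dtMomentSeries : constantCoeff (dtMomentSeries K) = 0 := by
  simp [dtMomentSeries, ← coeff_zero_eq_constantCoeff_apply]

theorem coeff_succ_dtMomentSeries (n : ℕ) :
    coeff (n + 1) (dtMomentSeries K) = (n : K) ^ n / (n + 1)! := by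
  simp [dtMomentSeries]

theorem coeff_derivative_dtMomentSeries [CharZero K] (n : ℕ) :
    coeff n (d⁄dX K (dtMomentSeries K)) = (n : K) ^ n / n ! := by
  rw [coeff_derivative, coeff_succ_dtMomentSeries, Nat.factorial_succ, Nat.cast_mul]
  field_simp [Nat.cast_ne_zero.mpr n.factorial_ne_zero]
  push_cast
  ring

theorem derivative_dtMomentSeries_mul [CharZero K] :
    d⁄dX K (dtMomentSeries K) * (1 - X - dtMomentSeries K) = 1 - dtMomentSeries K := by
  ext (_ | N)
  · simpa using coeff_derivative_dtMomentSeries (K := K) 0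
  · have hconv : coeff (N + 1) (d⁄dX K (dtMomentSeries K) * dtMomentSeries K) =
        (((N : K) + 1) ^ (N + 1) - (N : K) ^ (N + 1)) / (N + 1)! := by
      rw [coeff_mul, Nat.sum_antidiagonal_succ', ← sum_antidiagonal_pow_self_div_factorial]
      simp [coeff_derivative_dtMomentSeries, coeff_succ_dtMomentSeries]
    rw [mul_sub, mul_sub, mul_one, map_sub, map_sub, hconv, mul_comm, coeff_succ_X_mul,
      coeff_derivative_dtMomentSeries, coeff_derivative_dtMomentSeries, map_sub,
      coeff_succ_dtMomentSeries, coeff_one, if_neg N.succ_ne_zero, Nat.factorial_succ]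
    push_cast
    field_simp
    ring

theorem derivative_one_sub_dtMomentSeries [CharZero K] :
    d⁄dX K (1 - dtMomentSeries K) =
      -d⁄dX K (X * (1 - dtMomentSeries K)⁻¹) * (1 - dtMomentSeries K) := by
  set Y := dtMomentSeries K
  have hinv : (1 - Y)⁻¹ * (1 - Y) = 1 := PowerSeries.inv_mul_cancel _ (by simp [Y])
  have hode : d⁄dX K Y * (1 - X - Y) = 1 - Y := derivative_dtMomentSeries_mul
  rw [Derivation.leibniz, derivative_inv', derivative_X, map_sub, derivative_one, smul_eq_mul,
    smul_eq_mul]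
  linear_combination (-(1 - Y)⁻¹) * hode + (d⁄dX K Y + X * (1 - Y)⁻¹ * d⁄dX K Y) * hinv

end MomentSeries

/-- Let `Y₀(s) = ∑_{n≥0} (nⁿ/(n+1)!)·s^{n+1}` (with `0⁰ = 1`).  Then
`W(s) = s/(1−Y₀(s))` is a formal power series with zero constant term and
`W(s)·exp(−W(s)) = s`, i.e. `W` is the compositional inverse of `z·e^{−z}`.
Here `E = exp(−W)` is the formal composition, whose `n`-th coefficient is
`∑_{m≤n} ((−1)^m/m!)·[sⁿ](W^m)` (the sum truncates since `W` has zero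
constant term). -/
theorem lambert_inverse_of_moment_series
    (Y₀ W E : PowerSeries ℝ)
    (hY₀ : Y₀ = PowerSeries.mk (fun m =>
      if m = 0 then 0 else ((m - 1 : ℕ) : ℝ) ^ (m - 1) / (Nat.factorial m : ℝ)))
    (hW : W = PowerSeries.X * (1 - Y₀)⁻¹)
    (hE : E = PowerSeries.mk (fun n =>
      ∑ m ∈ Finset.range (n + 1),
        (-1 : ℝ) ^ m / (Nat.factorial m : ℝ) * PowerSeries.coeff n (W ^ m))) :
    PowerSeries.constantCoeff W = 0 ∧ W * E = PowerSeries.X := by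
  replace hY₀ : Y₀ = dtMomentSeries ℝ := hY₀
  have hW0 : constantCoeff W = 0 := by simp [hW]
  have hWF : W * (1 - Y₀) = X := by
    rw [hW, mul_assoc, PowerSeries.inv_mul_cancel _ (by simp [hY₀]), mul_one]
  have hE_exp : E = (exp ℝ).subst (-W) := by
    ext n
    rw [hE, coeff_mk, coeff_exp_subst (by simp [hW0])]
    refine sum_congr rfl fun m _ => ?_
    rw [show -W = C (-1 : ℝ) * W by simp, mul_pow, ← map_pow, coeff_C_mul]
    simp only [one_div, map_inv₀, map_natCast]
    ring
  have hEF : E = 1 - Y₀ := by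
    refine eq_of_derivative_eq_mul (h := -d⁄dX ℝ W) ?_ ?_ ?_
    · rw [hE_exp, derivative_exp_subst (by simp [hW0]), map_neg]
    · rw [hW, hY₀, derivative_one_sub_dtMomentSeries]
    · simp [hE, hY₀]
  exact ⟨hW0, by rw [hEF, hWF]⟩
end

section
/- Fix s with 0 < s < e^{−1} and let λ < 0 be any real solution of λ + s·e^{−λ} = 0. Then the functions X_u := 1 − e^{λu} and Y_u := 1 − e^{−λ(u−1)}, for u ∈ [0,1], satisfy X₀ = 0, Y₁ = 0, and solve the integral system X_u = s·∫₀^u (1 − Y_v)^{−1} dv and Y_u = s·∫_u^1 (1 − X_v)^{−1} dv. -/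
/-! Both `1 - Y` and `1 - X` are exponentials, so the two integrals are elementary, and
the relation `s e^{-λ} = -λ` is exactly what makes the constants in front of them equal to 1. -/

open Real intervalIntegral

theorem mul_integral_exp_mul (c a b : ℝ) :
    c * ∫ x in a..b, exp (c * x) = exp (c * b) - exp (c * a) := by
  rw [mul_integral_comp_mul_left, integral_exp]

theorem eq_neg_mul_exp_of_add_mul_exp_neg_eq_zero {s lam : ℝ}
    (heq : lam + s * exp (-lam) = 0) : s = exp lam * -lam := by
  calc s = s * exp (-lam) * exp lam := by
        rw [mul_assoc, ← exp_add, neg_add_cancel, exp_zero, mul_one]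
    _ = exp lam * -lam := by rw [eq_neg_of_add_eq_zero_right heq, mul_comm]

theorem explicit_solution_integral_system_general
    (s lam : ℝ) (heq : lam + s * Real.exp (-lam) = 0)
    (X Y : ℝ → ℝ)
    (hX : ∀ u, X u = 1 - Real.exp (lam * u))
    (hY : ∀ u, Y u = 1 - Real.exp (-lam * (u - 1))) :
    X 0 = 0 ∧ Y 1 = 0 ∧
    ∀ u ∈ Set.Icc (0:ℝ) 1,
      X u = s * ∫ v in (0:ℝ)..u, (1 - Y v)⁻¹ ∧
      Y u = s * ∫ v in u..(1:ℝ), (1 - X v)⁻¹ := by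
  have hY_inv : ∀ v, (1 - Y v)⁻¹ = exp (-lam) * exp (lam * v) := fun v => by
    rw [hY, sub_sub_cancel, ← exp_neg, ← exp_add]
    ring_nf
  have hX_inv : ∀ v, (1 - X v)⁻¹ = exp (-lam * v) := fun v => by
    rw [hX, sub_sub_cancel, ← exp_neg, neg_mul]
  refine ⟨by simp [hX], by simp [hY], fun u _ => ⟨?_, ?_⟩⟩
  · have hs : s * exp (-lam) = -lam := by linarith
    rw [funext hY_inv, integral_const_mul, ← mul_assoc, hs, neg_mul, mul_integral_exp_mul, hX]
    simp
  · rw [funext hX_inv, eq_neg_mul_exp_of_add_mul_exp_neg_eq_zero heq, mul_assoc,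
      mul_integral_exp_mul, mul_sub, ← exp_add, ← exp_add, hY, mul_one, add_neg_cancel,
      exp_zero]
    ring_nf

/-- Fix `0 < s < e⁻¹` and let `λ < 0` solve `λ + s·e^{−λ} = 0`.  Then
`X_u = 1 − e^{λu}` and `Y_u = 1 − e^{−λ(u−1)}` satisfy `X₀ = 0`, `Y₁ = 0` and
solve the integral system `X_u = s∫₀ᵘ (1−Y_v)⁻¹ dv`,
`Y_u = s∫ᵤ¹ (1−X_v)⁻¹ dv`. -/
theorem explicit_solution_integral_system
    (s lam : ℝ) (hs0 : 0 < s) (hs1 : s < Real.exp (-1))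
    (hlam : lam < 0) (heq : lam + s * Real.exp (-lam) = 0)
    (X Y : ℝ → ℝ)
    (hX : ∀ u, X u = 1 - Real.exp (lam * u))
    (hY : ∀ u, Y u = 1 - Real.exp (-lam * (u - 1))) :
    X 0 = 0 ∧ Y 1 = 0 ∧
    ∀ u ∈ Set.Icc (0:ℝ) 1,
      X u = s * ∫ v in (0:ℝ)..u, (1 - Y v)⁻¹ ∧
      Y u = s * ∫ v in u..(1:ℝ), (1 - X v)⁻¹ :=
  explicit_solution_integral_system_general s lam heq X Y hX hY
end
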